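/- arXiv:1503.07890 — 4 statements merged into one kernel-verified Lean document; each statement's English description precedes it below -/
import Mathlib

section
/- Let W be a finite group acting linearly on finite-dimensional complex vector spaces 𝔥 and 𝔥*, let (π, X) be a representation of W, and let B : 𝔥 × 𝔥* → End(X) be a bilinear map satisfying the equivariance B(w·y, w·x) = π(w) B(y, x) π(w)⁻¹ for all w ∈ W, y ∈ 𝔥, x ∈ 𝔥*. Suppose y ∈ 𝔥 and x_1, x_2 ∈ 𝔥* are such that (a) the orbit W·y spans 𝔥, and (b) the set {w·x_1 : w ∈ Z_W(y)} ∪ {x_2} spans 𝔥*, where Z_W(y) is the stabilizer of y in W. If B(y, x_1) = 0 and B(y, x_2) = 0, then B(y', x') = 0 for all y' ∈ 𝔥 and x' ∈ 𝔥*. -/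
open LinearMap

/-- reduction criterion.  `W` acts on `𝔥` and `𝔥*` and on `X`; `B` is a bilinear
map `𝔥 × 𝔥* → End X` satisfying `B(w·y, w·x) = π(w) B(y,x) π(w)⁻¹`.  If `W·y` spans `𝔥` and
`{Z_W(y)·x₁} ∪ {x₂}` spans `𝔥*`, and `B(y,x₁) = B(y,x₂) = 0`, then `B ≡ 0`. -/
theorem one_W_type_reduction_criterion
    {W : Type*} [Group W]
    {H Hs X : Type*} [AddCommGroup H] [Module ℂ H] [FiniteDimensional ℂ H]
    [AddCommGroup Hs] [Module ℂ Hs] [FiniteDimensional ℂ Hs]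
    [AddCommGroup X] [Module ℂ X]
    (ρH : W →* LinearMap.GeneralLinearGroup ℂ H)
    (ρHs : W →* LinearMap.GeneralLinearGroup ℂ Hs)
    (π : W →* LinearMap.GeneralLinearGroup ℂ X)
    (B : H →ₗ[ℂ] Hs →ₗ[ℂ] (X →ₗ[ℂ] X))
    (hequiv : ∀ (w : W) (y : H) (x : Hs),
      B ((ρH w : H →ₗ[ℂ] H) y) ((ρHs w : Hs →ₗ[ℂ] Hs) x)
        = (π w : X →ₗ[ℂ] X) ∘ₗ (B y x) ∘ₗ ((π w)⁻¹ : LinearMap.GeneralLinearGroup ℂ X))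
    (y : H) (x₁ x₂ : Hs)
    (ha : Submodule.span ℂ (Set.range fun w : W => (ρH w : H →ₗ[ℂ] H) y) = ⊤)
    (hb : Submodule.span ℂ
        ({x | ∃ w : W, (ρH w : H →ₗ[ℂ] H) y = y ∧ (ρHs w : Hs →ₗ[ℂ] Hs) x₁ = x} ∪ {x₂}) = ⊤)
    (h1 : B y x₁ = 0) (h2 : B y x₂ = 0) :
    ∀ (y' : H) (x' : Hs), B y' x' = 0 := by
  -- Step 1: B y = 0
  have hy : B y = 0 := by
    have hsub : ({x | ∃ w : W, (ρH w : H →ₗ[ℂ] H) y = y ∧ (ρHs w : Hs →ₗ[ℂ] Hs) x₁ = x} ∪ {x₂})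
        ⊆ (LinearMap.ker (B y) : Set Hs) := by
      rintro x (⟨w, hwy, hwx⟩ | hx)
      · have := hequiv w y x₁
        rw [hwy, hwx, h1] at this
        simpa using this
      · simp only [Set.mem_singleton_iff] at hx
        subst hx
        simpa using h2
    have := Submodule.span_le.mpr hsub
    rw [hb, top_le_iff] at this
    exact LinearMap.ker_eq_top.mp this
  -- Step 2: B vanishes on the orbit of y
  intro y' x'
  have hsub : (Set.range fun w : W => (ρH w : H →ₗ[ℂ] H) y)
      ⊆ (LinearMap.ker (B.flip x') : Set H) := by
    rintro _ ⟨w, rfl⟩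
    have := hequiv w y ((ρHs w⁻¹ : Hs →ₗ[ℂ] Hs) x')
    have hx : (ρHs w : Hs →ₗ[ℂ] Hs) ((ρHs w⁻¹ : Hs →ₗ[ℂ] Hs) x') = x' := by
      have : (ρHs w * ρHs w⁻¹ : LinearMap.GeneralLinearGroup ℂ Hs) = 1 := by
        rw [← map_mul, mul_inv_cancel, map_one]
      calc (ρHs w : Hs →ₗ[ℂ] Hs) ((ρHs w⁻¹ : Hs →ₗ[ℂ] Hs) x')
          = ((ρHs w * ρHs w⁻¹ : LinearMap.GeneralLinearGroup ℂ Hs) : Hs →ₗ[ℂ] Hs) x' := rfl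
        _ = x' := by rw [this]; rfl
    rw [hx, hy] at this
    simpa using this
  have := Submodule.span_le.mpr hsub
  rw [ha, top_le_iff] at this
  have h := LinearMap.ker_eq_top.mp this
  have : B.flip x' y' = 0 := by rw [h]; rfl
  simpa using this
end

section
/- Let V, ⟨·,·⟩, C(V), and α, α^∨ ∈ V be as follows: ⟨α,α⟩ = ⟨α^∨,α^∨⟩ = 0, k := ⟨α^∨,α⟩ = ⟨α,α^∨⟩ ≠ 0, and let τ = (α·α^∨)/k + 1 ∈ C(V). Let s : V → V be the linear involution with s(α) = −α, s(α^∨) = −α^∨, and s(v) = v whenever ⟨v, α⟩ = ⟨v, α^∨⟩ = 0. Then τ · v · τ = s(v) in C(V) for every v ∈ V. -/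
/-!
Write `x, y, z` for the images of `a, b, v` in the Clifford algebra and `p = polar Q a b`.
Since `x² = y² = 0` and anticommutators of vectors are scalars, `xyzxy = -p·xzy`, and
`xyz + zxy` is a combination of `x`, `y` and `xzy`. Expanding `(t·xy + 1) z (t·xy + 1)`, the
`xzy` terms carry the coefficient `-t(tp + 2)`, which vanishes exactly when `tp = -2`; what is
left is a vector. On the other side, splitting `v` along the hyperbolic pair `α, α^∨` and its
orthogonal complement computes `s v` as the same vector.
-/

namespace CliffordAlgebra

open QuadraticMap

variable {R M : Type*} [CommRing R] [AddCommGroup M] [Module R M] {Q : QuadraticForm R M}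

theorem ι_mul_ι_mul_ι_mul_ι_mul_ι_of_isotropic {a b : M} (ha : Q a = 0) (hb : Q b = 0)
    (v : M) :
    ι Q a * ι Q b * ι Q v * ι Q a * ι Q b = -(polar Q a b • (ι Q a * ι Q v * ι Q b)) := by
  have hbab : ι Q b * ι Q a * ι Q b = polar Q a b • ι Q b := by
    rw [ι_mul_ι_mul_ι, hb, zero_smul, sub_zero, map_smul, polar_comm _ a b]
  have haa : ι Q a * ι Q a = 0 := by rw [ι_sq_scalar, ha, map_zero]
  calc ι Q a * ι Q b * ι Q v * ι Q a * ι Q b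
      = polar Q b v • (ι Q a * ι Q a * ι Q b) -
          ι Q a * ι Q v * (ι Q b * ι Q a * ι Q b) := by
        rw [mul_assoc (ι Q a), ι_mul_ι_comm b v]
        simp only [mul_sub, sub_mul, ← Algebra.smul_def, mul_smul_comm, smul_mul_assoc, mul_assoc]
    _ = -(polar Q a b • (ι Q a * ι Q v * ι Q b)) := by
        rw [haa, zero_mul, smul_zero, zero_sub, hbab, mul_smul_comm]

theorem ι_mul_ι_mul_ι_add_ι_mul_ι_mul_ι (a b v : M) :
    ι Q a * ι Q b * ι Q v + ι Q v * ι Q a * ι Q b =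
      polar Q v b • ι Q a + polar Q v a • ι Q b - (2 : R) • (ι Q a * ι Q v * ι Q b) := by
  rw [ι_mul_ι_comm v a, mul_assoc (ι Q a), ι_mul_ι_comm b v, polar_comm _ b v]
  simp only [mul_sub, sub_mul, ← Algebra.commutes, ← Algebra.smul_def, mul_assoc]
  module

/-- The hypothesis `ht` also makes `t • (ι Q a * ι Q b) + 1` square to `1`, so this is a
conjugation. -/
theorem conj_ι_of_isotropic {a b : M} (ha : Q a = 0) (hb : Q b = 0) {t : R}
    (ht : t * polar Q a b = -2) (v : M) :
    (t • (ι Q a * ι Q b) + 1) * ι Q v * (t • (ι Q a * ι Q b) + 1) =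
      ι Q (v + (t * polar Q v b) • a + (t * polar Q v a) • b) := by
  have hexpand : (t • (ι Q a * ι Q b) + 1) * ι Q v * (t • (ι Q a * ι Q b) + 1) =
      (t * t) • (ι Q a * ι Q b * ι Q v * ι Q a * ι Q b) +
        t • (ι Q a * ι Q b * ι Q v + ι Q v * ι Q a * ι Q b) + ι Q v := by
    simp only [add_mul, mul_add, one_mul, mul_one, smul_mul_assoc, mul_smul_comm, smul_smul,
      mul_assoc, smul_add]
    abel
  rw [hexpand, ι_mul_ι_mul_ι_mul_ι_mul_ι_of_isotropic ha hb,
    ι_mul_ι_mul_ι_add_ι_mul_ι_mul_ι]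
  have hcancel : -(t * t * polar Q a b) - t * 2 = 0 := by linear_combination -t * ht
  simp only [map_add, map_smul]
  linear_combination (norm := module) hcancel • (ι Q a * ι Q v * ι Q b)

end CliffordAlgebra

theorem LinearMap.apply_eq_of_neg_of_fixes_orthogonal {K V : Type*} [Field K] [AddCommGroup V]
    [Module K V] (B : V →ₗ[K] V →ₗ[K] K) (hsymm : ∀ v w, B v w = B w v) {a b : V}
    (ha : B a a = 0) (hb : B b b = 0) (hk : B b a ≠ 0) (s : V →ₗ[K] V) (hsa : s a = -a)
    (hsb : s b = -b) (hfix : ∀ v, B v a = 0 → B v b = 0 → s v = v) (v : V) :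
    s v = v - (2 * B v b / B b a) • a - (2 * B v a / B b a) • b := by
  set w := v - (B v b / B b a) • a - (B v a / B b a) • b
  have hwa : B w a = 0 := by
    simp only [w, map_sub, map_smul, LinearMap.sub_apply, LinearMap.smul_apply, smul_eq_mul, ha]
    field_simp
    ring
  have hwb : B w b = 0 := by
    simp only [w, map_sub, map_smul, LinearMap.sub_apply, LinearMap.smul_apply, smul_eq_mul, hb,
      hsymm a b]
    field_simp
    ring
  have hv : v = w + (B v b / B b a) • a + (B v a / B b a) • b := by simp only [w]; abel
  calc s v = w - (B v b / B b a) • a - (B v a / B b a) • b := by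
        conv_lhs => rw [hv]
        simp only [map_add, map_smul, hsa, hsb, hfix w hwa hwb]
        module
    _ = v - (2 * B v b / B b a) • a - (2 * B v a / B b a) • b := by
        simp only [w]
        module

theorem tau_conj_eq_reflection_general
    {V : Type*} [AddCommGroup V] [Module ℂ V]
    (B : V →ₗ[ℂ] V →ₗ[ℂ] ℂ) (hsymm : ∀ v w, B v w = B w v)
    (Q : QuadraticForm ℂ V) (hQ : ∀ v, Q v = -(B v v))
    (α αv : V) (hα : B α α = 0) (hαv : B αv αv = 0) (hk : B αv α ≠ 0)
    (τ : CliffordAlgebra Q)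
    (hτ : τ = (B αv α)⁻¹ • (CliffordAlgebra.ι Q α * CliffordAlgebra.ι Q αv) + 1)
    (s : V →ₗ[ℂ] V) (hsα : s α = -α) (hsαv : s αv = -αv)
    (hsfix : ∀ v, B v α = 0 → B v αv = 0 → s v = v) :
    ∀ v : V, τ * CliffordAlgebra.ι Q v * τ = CliffordAlgebra.ι Q (s v) := by
  intro v
  have hpolar : ∀ x y, QuadraticMap.polar Q x y = -(2 * B x y) := fun x y => by
    simp only [QuadraticMap.polar, hQ, map_add, LinearMap.add_apply, hsymm y x]
    ring
  have ht : (B αv α)⁻¹ * QuadraticMap.polar Q α αv = -2 := by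
    rw [hpolar, hsymm α αv]
    field_simp
  rw [hτ, CliffordAlgebra.conj_ι_of_isotropic (by rw [hQ, hα, neg_zero])
      (by rw [hQ, hαv, neg_zero]) ht,
    LinearMap.apply_eq_of_neg_of_fixes_orthogonal B hsymm hα hαv hk s hsα hsαv hsfix,
    hpolar, hpolar]
  congr 1
  module

/-- With `τ = (α·α^∨)/k + 1` in the Clifford algebra (convention `v² = -⟨v,v⟩`,
`k = ⟨α^∨,α⟩ ≠ 0`, `α, α^∨` isotropic), and `s : V → V` the linear involution with
`s(α) = -α`, `s(α^∨) = -α^∨` and `s(v) = v` on the orthogonal complement of `α, α^∨`,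
one has `τ · v · τ = s(v)` for every `v ∈ V`. -/
theorem tau_conj_eq_reflection
    {V : Type*} [AddCommGroup V] [Module ℂ V] [FiniteDimensional ℂ V]
    (B : V →ₗ[ℂ] V →ₗ[ℂ] ℂ) (hsymm : ∀ v w, B v w = B w v)
    (hnd : ∀ v, (∀ w, B v w = 0) → v = 0)
    (Q : QuadraticForm ℂ V) (hQ : ∀ v, Q v = -(B v v))
    (α αv : V) (hα : B α α = 0) (hαv : B αv αv = 0) (hk : B αv α ≠ 0)
    (τ : CliffordAlgebra Q)
    (hτ : τ = (B αv α)⁻¹ • (CliffordAlgebra.ι Q α * CliffordAlgebra.ι Q αv) + 1)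
    (s : V →ₗ[ℂ] V) (hsα : s α = -α) (hsαv : s αv = -αv)
    (hsfix : ∀ v, B v α = 0 → B v αv = 0 → s v = v) :
    ∀ v : V, τ * CliffordAlgebra.ι Q v * τ = CliffordAlgebra.ι Q (s v) :=
  tau_conj_eq_reflection_general B hsymm Q hQ α αv hα hαv hk τ hτ s hsα hsαv hsfix
end

section
/- With the setup of the pin cover: let V be a complex vector space with nondegenerate symmetric form ⟨·,·⟩, and for each pair (α, α^∨) of isotropic vectors with k = ⟨α^∨, α⟩ ≠ 0, write τ(α, α^∨) = (α·α^∨)/k + 1 ∈ C(V) and let s(α, α^∨) ∈ O(V) be the associated reflection. Then for two such pairs (α, α^∨) and (β, β^∨), one has τ(α,α^∨) · τ(β,β^∨) · τ(α,α^∨) = τ(s(α,α^∨)(β), s(α,α^∨)(β^∨)) in C(V). -/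
/-!
With `k = B α^∨ α` and `e = α·α^∨ / k`, isotropy gives `α·α^∨·α = -2k α`, hence `e² = -2e` and
`τ = 1 + e` is an involution. Conjugation by `τ` negates `α` and `α^∨` and fixes every vector
orthogonal to both (those anticommute with `α` and `α^∨`, so commute with `e`); as these span `V`,
`τ ι(v) τ = ι(s v)` for all `v`. Conjugating `τ(β, β^∨) = β·β^∨ / ⟨β^∨, β⟩ + 1` by `τ` therefore
gives `s(β)·s(β^∨) / ⟨β^∨, β⟩ + 1`, and `s` preserves the pairing.
-/
open CliffordAlgebra

section
variable {K V : Type*} [Field K] [AddCommGroup V] [Module K V]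
  {B : V →ₗ[K] V →ₗ[K] K} {Q : QuadraticForm K V} {a b : V}

theorem polar_eq_neg_two_mul (hsymm : ∀ v w, B v w = B w v) (hQ : ∀ v, Q v = -(B v v))
    (v w : V) : QuadraticMap.polar Q v w = -(2 * B v w) := by
  simp only [QuadraticMap.polar, hQ, map_add, LinearMap.add_apply, hsymm w v]
  ring

theorem ι_mul_ι_eq_zero_of_isotropic (hQ : ∀ v, Q v = -(B v v)) (ha : B a a = 0) :
    ι Q a * ι Q a = 0 := by
  rw [ι_sq_scalar, hQ, ha, neg_zero, map_zero]

theorem ι_mul_ι_mul_ι_of_isotropic (hsymm : ∀ v w, B v w = B w v) (hQ : ∀ v, Q v = -(B v v))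
    (ha : B a a = 0) :
    ι Q a * ι Q b * ι Q a = (-(2 * B b a)) • ι Q a := by
  rw [ι_mul_ι_mul_ι, polar_eq_neg_two_mul hsymm hQ, hQ, ha, neg_zero, zero_smul, sub_zero,
    map_smul, hsymm]

variable (B Q) in
def tau (a b : V) : CliffordAlgebra Q := (B b a)⁻¹ • (ι Q a * ι Q b) + 1

theorem tau_mul_tau (hsymm : ∀ v w, B v w = B w v) (hQ : ∀ v, Q v = -(B v v))
    (ha : B a a = 0) (hk : B b a ≠ 0) : tau B Q a b * tau B Q a b = 1 := by
  set e := (B b a)⁻¹ • (ι Q a * ι Q b)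
  have hee : e * e = -2 • e := by
    rw [smul_mul_smul, ← mul_assoc, ι_mul_ι_mul_ι_of_isotropic hsymm hQ ha, smul_mul_assoc,
      smul_smul]
    match_scalars
    field_simp
  change (e + 1) * (e + 1) = 1
  simp only [add_mul, mul_add, hee, mul_one, one_mul]
  module

theorem tau_mul_ι_mul_tau_left (hsymm : ∀ v w, B v w = B w v) (hQ : ∀ v, Q v = -(B v v))
    (ha : B a a = 0) (hk : B b a ≠ 0) : tau B Q a b * ι Q a * tau B Q a b = -ι Q a := by
  set e := (B b a)⁻¹ • (ι Q a * ι Q b)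
  have hea : e * ι Q a = -2 • ι Q a := by
    rw [smul_mul_assoc, ι_mul_ι_mul_ι_of_isotropic hsymm hQ ha, smul_smul]
    match_scalars
    field_simp
  have hae : ι Q a * e = 0 := by
    rw [mul_smul_comm, ← mul_assoc, ι_mul_ι_eq_zero_of_isotropic hQ ha, zero_mul, smul_zero]
  calc (e + 1) * ι Q a * (e + 1) = e * ι Q a * e + e * ι Q a + ι Q a * e + ι Q a := by
        noncomm_ring
    _ = -ι Q a := by rw [hea, smul_mul_assoc, hae]; module

theorem tau_mul_ι_mul_tau_right (hsymm : ∀ v w, B v w = B w v) (hQ : ∀ v, Q v = -(B v v))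
    (hb : B b b = 0) (hk : B b a ≠ 0) : tau B Q a b * ι Q b * tau B Q a b = -ι Q b := by
  set e := (B b a)⁻¹ • (ι Q a * ι Q b)
  have hbe : ι Q b * e = -2 • ι Q b := by
    rw [mul_smul_comm, ← mul_assoc, ι_mul_ι_mul_ι_of_isotropic hsymm hQ hb, smul_smul, hsymm a b]
    match_scalars
    field_simp
  have heb : e * ι Q b = 0 := by
    rw [smul_mul_assoc, mul_assoc, ι_mul_ι_eq_zero_of_isotropic hQ hb, mul_zero, smul_zero]
  calc (e + 1) * ι Q b * (e + 1) = e * ι Q b * e + e * ι Q b + ι Q b * e + ι Q b := by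
        noncomm_ring
    _ = -ι Q b := by rw [heb, zero_mul, hbe]; module

theorem tau_mul_ι_mul_tau_of_orthogonal (hsymm : ∀ v w, B v w = B w v) (hQ : ∀ v, Q v = -(B v v))
    (ha : B a a = 0) (hk : B b a ≠ 0) {w : V} (hwa : B w a = 0) (hwb : B w b = 0) :
    tau B Q a b * ι Q w * tau B Q a b = ι Q w := by
  have hortho : ∀ {u}, B w u = 0 → Q.IsOrtho w u := fun hu => by
    rw [← QuadraticMap.isOrtho_polarBilin, QuadraticMap.polarBilin_apply_apply,
      polar_eq_neg_two_mul hsymm hQ, hu, mul_zero, neg_zero]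
  have hcomm : Commute (tau B Q a b) (ι Q w) := by
    refine (Commute.smul_left ?_ _).add_left (Commute.one_left _)
    change ι Q a * ι Q b * ι Q w = ι Q w * (ι Q a * ι Q b)
    symm
    rw [← mul_assoc, ι_mul_ι_comm_of_isOrtho (hortho hwa), neg_mul, mul_assoc,
      ι_mul_ι_comm_of_isOrtho (hortho hwb), mul_neg, neg_neg, mul_assoc]
  rw [hcomm.eq, mul_assoc, tau_mul_tau hsymm hQ ha hk, mul_one]

theorem exists_eq_orthogonal_add_smul_add_smul (hsymm : ∀ v w, B v w = B w v) (ha : B a a = 0)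
    (hb : B b b = 0) (hk : B b a ≠ 0) (v : V) :
    ∃ w : V, ∃ x y : K, B w a = 0 ∧ B w b = 0 ∧ v = w + x • a + y • b := by
  refine ⟨v - (B v b / B b a) • a - (B v a / B b a) • b, B v b / B b a, B v a / B b a,
    ?_, ?_, by abel⟩ <;>
  · simp only [map_sub, map_smul, LinearMap.sub_apply, LinearMap.smul_apply, smul_eq_mul, ha, hb,
      hsymm a b]
    field_simp
    ring

theorem map_add_smul_add_smul_of_reflection {s : V →ₗ[K] V} (hsa : s a = -a) (hsb : s b = -b)
    (hsfix : ∀ v, B v a = 0 → B v b = 0 → s v = v) {w : V} (hwa : B w a = 0) (hwb : B w b = 0)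
    (x y : K) : s (w + x • a + y • b) = w - x • a - y • b := by
  rw [map_add, map_add, map_smul, map_smul, hsa, hsb, hsfix w hwa hwb]
  module

theorem apply_map_map_eq_of_reflection (hsymm : ∀ v w, B v w = B w v) (ha : B a a = 0)
    (hb : B b b = 0) (hk : B b a ≠ 0) {s : V →ₗ[K] V} (hsa : s a = -a) (hsb : s b = -b)
    (hsfix : ∀ v, B v a = 0 → B v b = 0 → s v = v) (v v' : V) : B (s v) (s v') = B v v' := by
  obtain ⟨w, x, y, hwa, hwb, rfl⟩ := exists_eq_orthogonal_add_smul_add_smul hsymm ha hb hk v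
  obtain ⟨w', x', y', hwa', hwb', rfl⟩ := exists_eq_orthogonal_add_smul_add_smul hsymm ha hb hk v'
  rw [map_add_smul_add_smul_of_reflection hsa hsb hsfix hwa hwb,
    map_add_smul_add_smul_of_reflection hsa hsb hsfix hwa' hwb']
  simp only [map_add, map_sub, map_smul, LinearMap.add_apply, LinearMap.sub_apply,
    LinearMap.smul_apply, smul_eq_mul, hwa, hwb, hsymm a w', hsymm b w', hwa', hwb']
  ring

theorem tau_mul_ι_mul_tau (hsymm : ∀ v w, B v w = B w v) (hQ : ∀ v, Q v = -(B v v))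
    (ha : B a a = 0) (hb : B b b = 0) (hk : B b a ≠ 0) {s : V →ₗ[K] V} (hsa : s a = -a)
    (hsb : s b = -b) (hsfix : ∀ v, B v a = 0 → B v b = 0 → s v = v) (v : V) :
    tau B Q a b * ι Q v * tau B Q a b = ι Q (s v) := by
  obtain ⟨w, x, y, hwa, hwb, rfl⟩ := exists_eq_orthogonal_add_smul_add_smul hsymm ha hb hk v
  rw [map_add_smul_add_smul_of_reflection hsa hsb hsfix hwa hwb]
  simp only [map_add, map_sub, map_smul, mul_add, add_mul, mul_smul_comm, smul_mul_assoc,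
    tau_mul_ι_mul_tau_of_orthogonal hsymm hQ ha hk hwa hwb, tau_mul_ι_mul_tau_left hsymm hQ ha hk,
    tau_mul_ι_mul_tau_right hsymm hQ hb hk]
  module

end

theorem tau_conj_tau_general
    {V : Type*} [AddCommGroup V] [Module ℂ V]
    (B : V →ₗ[ℂ] V →ₗ[ℂ] ℂ) (hsymm : ∀ v w, B v w = B w v)
    (Q : QuadraticForm ℂ V) (hQ : ∀ v, Q v = -(B v v))
    (α αv : V) (hα : B α α = 0) (hαv : B αv αv = 0) (hkα : B αv α ≠ 0)
    (β βv : V)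
    (s : V →ₗ[ℂ] V) (hsα : s α = -α) (hsαv : s αv = -αv)
    (hsfix : ∀ v, B v α = 0 → B v αv = 0 → s v = v)
    (τα τβ τsβ : CliffordAlgebra Q)
    (hτα : τα = (B αv α)⁻¹ • (CliffordAlgebra.ι Q α * CliffordAlgebra.ι Q αv) + 1)
    (hτβ : τβ = (B βv β)⁻¹ • (CliffordAlgebra.ι Q β * CliffordAlgebra.ι Q βv) + 1)
    (hτsβ : τsβ = (B (s βv) (s β))⁻¹ •
        (CliffordAlgebra.ι Q (s β) * CliffordAlgebra.ι Q (s βv)) + 1) :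
    τα * τβ * τα = τsβ := by
  subst hτα hτβ hτsβ
  change tau B Q α αv * tau B Q β βv * tau B Q α αv = tau B Q (s β) (s βv)
  set t := tau B Q α αv
  have ht : ∀ x, t * (t * x) = x := fun x => by
    rw [← mul_assoc, tau_mul_tau hsymm hQ hα hkα, one_mul]
  have hconj := tau_mul_ι_mul_tau hsymm hQ hα hαv hkα hsα hsαv hsfix
  calc t * tau B Q β βv * t = (B βv β)⁻¹ • ((t * ι Q β * t) * (t * ι Q βv * t)) + t * t := by
        simp only [tau, mul_add, add_mul, mul_smul_comm, smul_mul_assoc, mul_one, mul_assoc, ht]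
    _ = tau B Q (s β) (s βv) := by
        rw [hconj, hconj, tau_mul_tau hsymm hQ hα hkα, tau,
          apply_map_map_eq_of_reflection hsymm hα hαv hkα hsα hsαv hsfix]

/-- pin cover conjugation identity.  For two isotropic pairs `(α, α^∨)` and
`(β, β^∨)` with nonzero pairings, and `s` the reflection associated to `(α, α^∨)`,
one has `τ(α,α^∨) · τ(β,β^∨) · τ(α,α^∨) = τ(s(β), s(β^∨))` in the Clifford algebra
(convention `v² = -⟨v,v⟩`, `τ(γ,γ^∨) = (γ·γ^∨)/⟨γ^∨,γ⟩ + 1`). -/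
theorem tau_conj_tau
    {V : Type*} [AddCommGroup V] [Module ℂ V] [FiniteDimensional ℂ V]
    (B : V →ₗ[ℂ] V →ₗ[ℂ] ℂ) (hsymm : ∀ v w, B v w = B w v)
    (hnd : ∀ v, (∀ w, B v w = 0) → v = 0)
    (Q : QuadraticForm ℂ V) (hQ : ∀ v, Q v = -(B v v))
    (α αv : V) (hα : B α α = 0) (hαv : B αv αv = 0) (hkα : B αv α ≠ 0)
    (β βv : V) (hβ : B β β = 0) (hβv : B βv βv = 0) (hkβ : B βv β ≠ 0)
    (s : V →ₗ[ℂ] V) (hsα : s α = -α) (hsαv : s αv = -αv)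
    (hsfix : ∀ v, B v α = 0 → B v αv = 0 → s v = v)
    (τα τβ τsβ : CliffordAlgebra Q)
    (hτα : τα = (B αv α)⁻¹ • (CliffordAlgebra.ι Q α * CliffordAlgebra.ι Q αv) + 1)
    (hτβ : τβ = (B βv β)⁻¹ • (CliffordAlgebra.ι Q β * CliffordAlgebra.ι Q βv) + 1)
    (hτsβ : τsβ = (B (s βv) (s β))⁻¹ •
        (CliffordAlgebra.ι Q (s β) * CliffordAlgebra.ι Q (s βv)) + 1) :
    τα * τβ * τα = τsβ :=
  tau_conj_tau_general B hsymm Q hQ α αv hα hαv hkα β βv s hsα hsαv hsfix τα τβ τsβ hτα hτβ hτsβ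
end

section
/- Let W ⊂ GL(𝔥) be a finite real reflection group acting on V = 𝔥 ⊕ 𝔥* (diagonally, via the dual action on 𝔥*), let C(V) be the Clifford algebra of the W-invariant pairing ⟨x,y⟩ = x(y) (with 𝔥, 𝔥* isotropic), and let S = Λ𝔥 be the spin module with the standard Clifford action. For a reflection s ∈ W with root α ∈ 𝔥* and coroot α^∨ ∈ 𝔥, the element τ_s = (α·α^∨)/⟨α^∨,α⟩ + 1 ∈ C(V) acts on S preserving each graded piece Λ^ℓ𝔥, and its action there is τ_s·(y_1 ∧ … ∧ y_ℓ) = det_𝔥(s) · s(y_1) ∧ … ∧ s(y_ℓ) = −(s(y_1) ∧ … ∧ s(y_ℓ)). -/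
open ExteriorAlgebra

/-- The action of `y ∈ 𝔥` on the spin module `Λ𝔥`: exterior (wedge) multiplication. -/
noncomputable def spinY {H : Type*} [AddCommGroup H] [Module ℂ H] (y : H) :
    ExteriorAlgebra ℂ H →ₗ[ℂ] ExteriorAlgebra ℂ H :=
  LinearMap.mulLeft ℂ (ExteriorAlgebra.ι ℂ y)

/-- The action of `x ∈ 𝔥*` on the spin module `Λ𝔥`: `-2` times contraction (interior product). -/
noncomputable def spinX {H : Type*} [AddCommGroup H] [Module ℂ H] (x : Module.Dual ℂ H) :
    ExteriorAlgebra ℂ H →ₗ[ℂ] ExteriorAlgebra ℂ H :=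
  (-2 : ℂ) • CliffordAlgebra.contractLeft (Q := (0 : QuadraticForm ℂ H)) x

/-- for a reflection `s` with root `α ∈ 𝔥*` and coroot `α^∨ ∈ 𝔥`
(`k = ⟨α^∨, α⟩ = α(α^∨) ≠ 0`, `s(y) = y - (2/k)·α(y)·α^∨` on `𝔥`), the element
`τ_s = (α·α^∨)/k + 1` of `C(𝔥 ⊕ 𝔥*)` acts on the spin module `S = Λ𝔥` preserving each graded
piece `Λ^ℓ𝔥`, and acts there by `τ_s·(y₁ ∧ … ∧ y_ℓ) = det_𝔥(s)·s(y₁) ∧ … ∧ s(y_ℓ)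
= -(s(y₁) ∧ … ∧ s(y_ℓ))`. -/
theorem tau_action_on_spin_module
    {H : Type*} [AddCommGroup H] [Module ℂ H]
    (α : Module.Dual ℂ H) (αv : H) (k : ℂ) (hk : k = α αv) (hk0 : k ≠ 0)
    (τop : ExteriorAlgebra ℂ H →ₗ[ℂ] ExteriorAlgebra ℂ H)
    (hτ : τop = k⁻¹ • (spinX α ∘ₗ spinY αv) + LinearMap.id)
    (s : H →ₗ[ℂ] H) (hs : ∀ y, s y = y - (2 * k⁻¹ * α y) • αv) :
    (∀ ℓ : ℕ, Submodule.map τop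
        ((LinearMap.range (ExteriorAlgebra.ι ℂ : H →ₗ[ℂ] ExteriorAlgebra ℂ H)) ^ ℓ) ≤
      (LinearMap.range (ExteriorAlgebra.ι ℂ : H →ₗ[ℂ] ExteriorAlgebra ℂ H)) ^ ℓ) ∧
    (∀ (ℓ : ℕ) (y : Fin ℓ → H),
      τop (List.ofFn fun i => ExteriorAlgebra.ι ℂ (y i)).prod
        = -(List.ofFn fun i => ExteriorAlgebra.ι ℂ (s (y i))).prod) := by
  set c : ExteriorAlgebra ℂ H →ₗ[ℂ] ExteriorAlgebra ℂ H :=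
    CliffordAlgebra.contractLeft (Q := (0 : QuadraticForm ℂ H)) α with hc
  -- basic formula for τop
  have hform : ∀ x : ExteriorAlgebra ℂ H,
      τop x = -x + (2 * k⁻¹) • (ExteriorAlgebra.ι ℂ αv * c x) := by
    intro x
    have hcm : c (ExteriorAlgebra.ι ℂ αv * x)
        = α αv • x - ExteriorAlgebra.ι ℂ αv * c x :=
      CliffordAlgebra.contractLeft_ι_mul (Q := (0 : QuadraticForm ℂ H)) α αv x
    simp only [hτ, LinearMap.add_apply, LinearMap.smul_apply, LinearMap.comp_apply,
      LinearMap.id_apply, spinX, spinY, LinearMap.mulLeft_apply, LinearMap.smul_apply,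
      ← hc, hcm, ← hk]
    match_scalars <;> (field_simp; try ring)
  -- key multiplicative relation
  have hkey : ∀ (y : H) (x : ExteriorAlgebra ℂ H),
      τop (ExteriorAlgebra.ι ℂ y * x) = ExteriorAlgebra.ι ℂ (s y) * τop x := by
    intro y x
    have hcm : c (ExteriorAlgebra.ι ℂ y * x)
        = α y • x - ExteriorAlgebra.ι ℂ y * c x :=
      CliffordAlgebra.contractLeft_ι_mul (Q := (0 : QuadraticForm ℂ H)) α y x
    have hanti : ExteriorAlgebra.ι ℂ αv * ExteriorAlgebra.ι ℂ y
        = -(ExteriorAlgebra.ι ℂ y * ExteriorAlgebra.ι ℂ αv) := by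
      have := ExteriorAlgebra.ι_sq_zero (R := ℂ) (y + αv)
      have h1 := ExteriorAlgebra.ι_sq_zero (R := ℂ) y
      have h2 := ExteriorAlgebra.ι_sq_zero (R := ℂ) αv
      rw [map_add, add_mul, mul_add, mul_add, h1, h2, zero_add, add_zero] at this
      exact eq_neg_of_add_eq_zero_right this
    have hsq : ExteriorAlgebra.ι ℂ αv * ExteriorAlgebra.ι ℂ αv = 0 :=
      ExteriorAlgebra.ι_sq_zero (R := ℂ) αv
    rw [hform, hform, hcm, hs y, map_sub, map_smul]
    simp only [mul_sub, sub_mul, mul_add, smul_mul_assoc, mul_smul_comm, smul_sub, smul_add,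
      smul_smul, mul_neg, neg_mul, neg_neg, smul_neg, ← mul_assoc, hanti, hsq, zero_mul,
      mul_zero, smul_zero, sub_zero]
    module
  have hone : τop 1 = -1 := by
    rw [hform, CliffordAlgebra.contractLeft_one, mul_zero, smul_zero, add_zero]
  have halg : ∀ r : ℂ, τop (algebraMap ℂ _ r) = -(algebraMap ℂ _ r) := by
    intro r
    rw [hform, CliffordAlgebra.contractLeft_algebraMap, mul_zero, smul_zero, add_zero]
  constructor
  · intro ℓ x hx
    obtain ⟨x, hx, rfl⟩ := hx
    induction hx using Submodule.pow_induction_on_left' with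
    | algebraMap r => rw [halg]; exact neg_mem (Submodule.algebraMap_mem r)
    | add x y i hx hy ihx ihy => rw [map_add]; exact add_mem ihx ihy
    | mem_mul m hm i x hx ih =>
      obtain ⟨m, rfl⟩ := hm
      rw [hkey, pow_succ']
      exact Submodule.mul_mem_mul (LinearMap.mem_range_self _ (s m)) ih
  · intro ℓ y
    induction ℓ with
    | zero => simpa using hone
    | succ n ih =>
      rw [List.ofFn_succ, List.prod_cons, hkey, ih (fun i => y i.succ)]
      rw [List.ofFn_succ, List.prod_cons, mul_neg]
end
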